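/- arXiv:1307.7952 — 5 statements merged into one kernel-verified Lean document; each statement's English description precedes it below -/
import Mathlib

section
/- Let n ≥ 1 and let walk(n) denote the set of simple walks of length n, i.e. functions w : {0,1,…,n} → ℤ with w(0)=0 and |w(j) − w(j−1)| = 1 for all 1 ≤ j ≤ n. Then the map w ↦ (V(w), K(w)) is a bijection from walk(n) onto the set {(v,k) : v ∈ walk(n), 0 ≤ k ≤ n, v(j) ≥ 0 for all 0 ≤ j ≤ k, and v(j) > v(n) for all k ≤ j < n}. -/
/-!
Discrete Vervaat transform of simple walks.

A simple walk of length `n` is a function `w : Fin (n+1) → ℤ` with `w 0 = 0` and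
increments `±1`.  For convenience we extend a walk to all natural indices by
clamping the index to `[0, n]` (`extW`); all definitions below only depend on
the values on `{0, …, n}`.
-/

/-- Extension of `w : Fin (n+1) → ℤ` to all of `ℕ` by clamping the index. -/
def extW (n : ℕ) (w : Fin (n + 1) → ℤ) (j : ℕ) : ℤ :=
  w ⟨min j n, Nat.lt_succ_of_le (min_le_right j n)⟩

/-- `w` is a simple walk of length `n`: `w 0 = 0` and `|w j − w (j−1)| = 1` for
`1 ≤ j ≤ n`. -/
def IsSimpleWalk (n : ℕ) (w : Fin (n + 1) → ℤ) : Prop :=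
  w 0 = 0 ∧ ∀ j : ℕ, 1 ≤ j → j ≤ n → |extW n w j - extW n w (j - 1)| = 1

/-- `tauW n w` is the first index in `{0,…,n}` at which `w` attains its minimum. -/
noncomputable def tauW (n : ℕ) (w : Fin (n + 1) → ℤ) : ℕ :=
  sInf {j | j ≤ n ∧ ∀ i ≤ n, extW n w j ≤ extW n w i}

/-- `KW n w = n − τ(w)`, the distance from the first global minimum to the end. -/
noncomputable def KW (n : ℕ) (w : Fin (n + 1) → ℤ) : ℕ := n - tauW n w

/-- The discrete Vervaat transform of a simple walk of length `n`:
`V(w)_i = w(τ+i) − w(τ)` for `i ≤ n − τ` and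
`V(w)_i = w(τ+i−n) + w(n) − w(τ)` for `n − τ ≤ i ≤ n`. -/
noncomputable def vervaatW (n : ℕ) (w : Fin (n + 1) → ℤ) : Fin (n + 1) → ℤ :=
  fun i =>
    if (i : ℕ) ≤ n - tauW n w then
      extW n w (tauW n w + i) - extW n w (tauW n w)
    else
      extW n w (tauW n w + i - n) + extW n w n - extW n w (tauW n w)

namespace VervaatAux

lemma extW_eq (n : ℕ) (w : Fin (n+1) → ℤ) {j : ℕ} (h : j ≤ n) :
    extW n w j = w ⟨j, by omega⟩ := by
  simp [extW, min_eq_left h]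

lemma extW_zero (n : ℕ) (w : Fin (n+1) → ℤ) : extW n w 0 = w 0 := by
  rw [extW_eq n w (Nat.zero_le n)]; rfl

lemma tau_mem (n : ℕ) (w : Fin (n+1) → ℤ) :
    tauW n w ≤ n ∧ ∀ i ≤ n, extW n w (tauW n w) ≤ extW n w i := by
  have hne : {j | j ≤ n ∧ ∀ i ≤ n, extW n w j ≤ extW n w i}.Nonempty := by
    obtain ⟨j, hj, hmin⟩ := Finset.exists_min_image (Finset.range (n+1)) (extW n w)
      ⟨0, by simp⟩
    exact ⟨j, by simpa using Nat.lt_succ_iff.mp (Finset.mem_range.mp hj),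
      fun i hi => hmin i (Finset.mem_range.mpr (Nat.lt_succ_of_le hi))⟩
  exact Nat.sInf_mem hne

lemma tau_le (n : ℕ) (w : Fin (n+1) → ℤ) : tauW n w ≤ n := (tau_mem n w).1

lemma tau_min (n : ℕ) (w : Fin (n+1) → ℤ) {i : ℕ} (hi : i ≤ n) :
    extW n w (tauW n w) ≤ extW n w i := (tau_mem n w).2 i hi

lemma tau_first (n : ℕ) (w : Fin (n+1) → ℤ) {j : ℕ} (hj : j < tauW n w) :
    extW n w (tauW n w) < extW n w j := by
  have hjn : j ≤ n := le_trans (le_of_lt hj) (tau_le n w)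
  have hns : j ∉ {j | j ≤ n ∧ ∀ i ≤ n, extW n w j ≤ extW n w i} :=
    Nat.notMem_of_lt_sInf hj
  simp only [Set.mem_setOf_eq, not_and, not_forall] at hns
  obtain ⟨i, hi, hlt⟩ := hns hjn
  push_neg at hlt
  exact lt_of_le_of_lt (tau_min n w hi) hlt

end VervaatAux

namespace VervaatAux

lemma extW_vervaat (n : ℕ) (w : Fin (n+1) → ℤ) {j : ℕ} (hj : j ≤ n) :
    extW n (vervaatW n w) j =
      if j ≤ n - tauW n w then
        extW n w (tauW n w + j) - extW n w (tauW n w)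
      else
        extW n w (tauW n w + j - n) + extW n w n - extW n w (tauW n w) := by
  rw [extW_eq n _ hj]
  simp [vervaatW]

/-- On the "late" range `n - τ ≤ j ≤ n`, the second formula is valid (they agree at
the seam). -/
lemma extW_vervaat' (n : ℕ) (w : Fin (n+1) → ℤ) (hw : IsSimpleWalk n w) {j : ℕ}
    (hj : j ≤ n) (hj' : n - tauW n w ≤ j) :
    extW n (vervaatW n w) j =
      extW n w (tauW n w + j - n) + extW n w n - extW n w (tauW n w) := by
  rw [extW_vervaat n w hj]
  rcases lt_or_eq_of_le hj' with h | h
  · rw [if_neg (by omega)]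
  · have ht := tau_le n w
    rw [if_pos (by omega)]
    have h1 : tauW n w + j = n := by omega
    have h2 : tauW n w + j - n = 0 := by omega
    rw [h2, h1, extW_zero, hw.1]
    ring

lemma extW_vervaat_n (n : ℕ) (w : Fin (n+1) → ℤ) (hw : IsSimpleWalk n w) :
    extW n (vervaatW n w) n = extW n w n := by
  rw [extW_vervaat' n w hw le_rfl (Nat.sub_le n _)]
  have ht := tau_le n w
  have : tauW n w + n - n = tauW n w := by omega
  rw [this]; ring

lemma vervaat_isWalk (n : ℕ) (hn : 1 ≤ n) (w : Fin (n+1) → ℤ) (hw : IsSimpleWalk n w) :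
    IsSimpleWalk n (vervaatW n w) := by
  have ht := tau_le n w
  constructor
  · have h0 : extW n (vervaatW n w) 0 = 0 := by
      rw [extW_vervaat n w (Nat.zero_le n), if_pos (Nat.zero_le _)]
      simp
    rwa [extW_zero] at h0
  · intro j hj1 hjn
    set τ := tauW n w with hτ
    rcases le_or_gt j (n - τ) with hcase | hcase
    · -- both indices in first branch
      rw [extW_vervaat n w hjn, if_pos hcase,
          extW_vervaat n w (by omega), if_pos (by omega)]
      have : τ + j - 1 = τ + (j - 1) := by omega
      have hgoal : extW n w (τ + j) - extW n w τ - (extW n w (τ + (j-1)) - extW n w τ)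
          = extW n w (τ + j) - extW n w (τ + j - 1) := by rw [this]; ring
      rw [hgoal]
      exact hw.2 (τ + j) (by omega) (by omega)
    · -- j - 1 ≥ n - τ : use second formula for both (valid at seam)
      rw [extW_vervaat' n w hw hjn (by omega),
          extW_vervaat' n w hw (by omega) (by omega)]
      have h1 : τ + j - n ≥ 1 := by omega
      have h2 : τ + (j - 1) - n = (τ + j - n) - 1 := by omega
      have hgoal : extW n w (τ + j - n) + extW n w n - extW n w τ -
          (extW n w (τ + (j-1) - n) + extW n w n - extW n w τ)
          = extW n w (τ + j - n) - extW n w ((τ + j - n) - 1) := by rw [h2]; ring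
      rw [hgoal]
      exact hw.2 (τ + j - n) h1 (by omega)

lemma vervaat_nonneg (n : ℕ) (w : Fin (n+1) → ℤ) {j : ℕ} (hj : j ≤ n - tauW n w) :
    0 ≤ extW n (vervaatW n w) j := by
  have ht := tau_le n w
  rw [extW_vervaat n w (by omega), if_pos hj]
  have := tau_min n w (i := tauW n w + j) (by omega)
  omega

lemma vervaat_gt (n : ℕ) (w : Fin (n+1) → ℤ) (hw : IsSimpleWalk n w) {j : ℕ}
    (hj : n - tauW n w ≤ j) (hjn : j < n) :
    extW n (vervaatW n w) n < extW n (vervaatW n w) j := by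
  have ht := tau_le n w
  rw [extW_vervaat_n n w hw, extW_vervaat' n w hw (le_of_lt hjn) hj]
  have hlt : tauW n w + j - n < tauW n w := by omega
  have := tau_first n w hlt
  omega

end VervaatAux

namespace VervaatAux

/-- Candidate inverse of the Vervaat transform. -/
noncomputable def invV (n : ℕ) (v : Fin (n+1) → ℤ) (k : ℕ) : Fin (n+1) → ℤ :=
  fun j =>
    if (j : ℕ) ≤ n - k then extW n v ((j : ℕ) + k) - extW n v k
    else extW n v ((j : ℕ) - (n - k)) + extW n v n - extW n v k

lemma extW_invV (n : ℕ) (v : Fin (n+1) → ℤ) (k : ℕ) {j : ℕ} (hj : j ≤ n) :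
    extW n (invV n v k) j =
      if j ≤ n - k then extW n v (j + k) - extW n v k
      else extW n v (j - (n - k)) + extW n v n - extW n v k := by
  rw [extW_eq n _ hj]
  simp [invV]

/-- On the range `n - k ≤ j ≤ n` the second formula is valid (assuming `v 0 = 0`,
`k ≤ n`). -/
lemma extW_invV' (n : ℕ) (v : Fin (n+1) → ℤ) (hv0 : v 0 = 0) {k : ℕ} (hk : k ≤ n)
    {j : ℕ} (hj : j ≤ n) (hj' : n - k ≤ j) :
    extW n (invV n v k) j = extW n v (j - (n - k)) + extW n v n - extW n v k := by
  rw [extW_invV n v k hj]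
  rcases lt_or_eq_of_le hj' with h | h
  · rw [if_neg (by omega)]
  · rw [if_pos (by omega)]
    rw [show j - (n - k) = 0 from by omega, show j + k = n from by omega,
        extW_zero, hv0]
    ring

lemma invV_isWalk (n : ℕ) (hn : 1 ≤ n) (v : Fin (n+1) → ℤ) (hv : IsSimpleWalk n v)
    {k : ℕ} (hk : k ≤ n) : IsSimpleWalk n (invV n v k) := by
  constructor
  · have h0 : extW n (invV n v k) 0 = 0 := by
      rw [extW_invV n v k (Nat.zero_le n), if_pos (Nat.zero_le _)]
      simp
    rwa [extW_zero] at h0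
  · intro j hj1 hjn
    rcases le_or_gt j (n - k) with hcase | hcase
    · rw [extW_invV n v k hjn, if_pos hcase,
          extW_invV n v k (by omega), if_pos (by omega)]
      rw [show j - 1 + k = (j + k) - 1 from by omega,
          show extW n v (j + k) - extW n v k - (extW n v (j + k - 1) - extW n v k)
            = extW n v (j + k) - extW n v (j + k - 1) from by ring]
      exact hv.2 (j + k) (by omega) (by omega)
    · rw [extW_invV' n v hv.1 hk hjn (by omega),
          extW_invV' n v hv.1 hk (by omega) (by omega)]
      rw [show (j - 1) - (n - k) = (j - (n - k)) - 1 from by omega,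
          show extW n v (j - (n - k)) + extW n v n - extW n v k -
            (extW n v (j - (n - k) - 1) + extW n v n - extW n v k)
            = extW n v (j - (n - k)) - extW n v (j - (n - k) - 1) from by ring]
      exact hv.2 (j - (n - k)) (by omega) (by omega)

section Inv
variable (n : ℕ) (v : Fin (n+1) → ℤ) (hv : IsSimpleWalk n v) {k : ℕ} (hk : k ≤ n)
  (hpos : ∀ j : ℕ, j ≤ k → 0 ≤ extW n v j)
  (hgt : ∀ j : ℕ, k ≤ j → j < n → extW n v n < extW n v j)

include hv hk

lemma invV_at_tau : extW n (invV n v k) (n - k) = extW n v n - extW n v k := by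
  rw [extW_invV n v k (by omega), if_pos le_rfl, show n - k + k = n from by omega]

include hpos hgt in
lemma invV_min {j : ℕ} (hj : j ≤ n) :
    extW n (invV n v k) (n - k) ≤ extW n (invV n v k) j := by
  rw [invV_at_tau n v hv hk]
  rcases le_or_gt j (n - k) with hcase | hcase
  · rw [extW_invV n v k hj, if_pos hcase]
    have h1 : k ≤ j + k := by omega
    rcases lt_or_eq_of_le (show j + k ≤ n from by omega) with h | h
    · have := hgt (j + k) h1 h
      omega
    · rw [h]
  · rw [extW_invV' n v hv.1 hk hj (le_of_lt hcase)]
    have := hpos (j - (n - k)) (by omega)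
    omega

include hgt in
lemma invV_strict {j : ℕ} (hj : j < n - k) :
    extW n (invV n v k) (n - k) < extW n (invV n v k) j := by
  rw [invV_at_tau n v hv hk, extW_invV n v k (by omega), if_pos (le_of_lt hj)]
  have := hgt (j + k) (by omega) (by omega)
  omega

include hpos hgt in
lemma tau_invV : tauW n (invV n v k) = n - k := by
  have hmem : n - k ∈ {j | j ≤ n ∧ ∀ i ≤ n, extW n (invV n v k) (n - k)
      ≤ extW n (invV n v k) i} :=
    ⟨by omega, fun i hi => invV_min n v hv hk hpos hgt hi⟩
  have hle : tauW n (invV n v k) ≤ n - k := Nat.sInf_le hmem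
  rcases lt_or_eq_of_le hle with h | h
  · exfalso
    have h1 := invV_strict n v hv hk hgt h
    have h2 := tau_min n (invV n v k) (i := n - k) (by omega)
    omega
  · exact h

end Inv

end VervaatAux

namespace VervaatAux

lemma funext_of_extW {n : ℕ} {f g : Fin (n+1) → ℤ}
    (h : ∀ j ≤ n, extW n f j = extW n g j) : f = g := by
  funext i
  have hi : (i : ℕ) ≤ n := by omega
  have := h i hi
  rwa [extW_eq n f hi, extW_eq n g hi] at this

section RightInv
variable (n : ℕ) (hn : 1 ≤ n) (v : Fin (n+1) → ℤ) (hv : IsSimpleWalk n v)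
  {k : ℕ} (hk : k ≤ n)
  (hpos : ∀ j : ℕ, j ≤ k → 0 ≤ extW n v j)
  (hgt : ∀ j : ℕ, k ≤ j → j < n → extW n v n < extW n v j)

include hv hk hpos hgt

lemma KW_invV : KW n (invV n v k) = k := by
  rw [KW, tau_invV n v hv hk hpos hgt]; omega

omit hpos hgt in
lemma invV_n : extW n (invV n v k) n = extW n v n := by
  rw [extW_invV' n v hv.1 hk le_rfl (by omega),
      show n - (n - k) = k from by omega]
  ring

include hn in
lemma vervaat_invV : vervaatW n (invV n v k) = v := by
  have hτ := tau_invV n v hv hk hpos hgt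
  have hwalk : IsSimpleWalk n (invV n v k) := invV_isWalk n hn v hv hk
  apply funext_of_extW
  intro j hj
  rcases le_or_gt j k with hcase | hcase
  · rw [extW_vervaat n (invV n v k) hj, hτ, if_pos (by omega)]
    rw [extW_invV' n v hv.1 hk (j := n - k + j) (by omega) (by omega),
        show n - k + j - (n - k) = j from by omega,
        invV_at_tau n v hv hk]
    ring
  · rw [extW_vervaat' n (invV n v k) hwalk hj (by omega), hτ]
    rw [show n - k + j - n = j - k from by omega,
        extW_invV n v k (j := j - k) (by omega), if_pos (by omega),
        show j - k + k = j from by omega,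
        invV_n n v hv hk, invV_at_tau n v hv hk]
    ring

end RightInv

section LeftInv
variable (n : ℕ) (w : Fin (n+1) → ℤ) (hw : IsSimpleWalk n w)

include hw in
lemma invV_vervaat : invV n (vervaatW n w) (KW n w) = w := by
  have ht := tau_le n w
  have hK : n - KW n w = tauW n w := by unfold KW; omega
  have hKn : KW n w ≤ n := by unfold KW; omega
  have hv0 : vervaatW n w 0 = 0 := (by
    have h0 : extW n (vervaatW n w) 0 = 0 := by
      rw [extW_vervaat n w (Nat.zero_le n), if_pos (Nat.zero_le _)]; simp
    rwa [extW_zero] at h0)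
  have hvK : extW n (vervaatW n w) (KW n w) = extW n w n - extW n w (tauW n w) := by
    rw [extW_vervaat' n w hw hKn le_rfl,
        show tauW n w + KW n w - n = 0 from by unfold KW; omega,
        extW_zero, hw.1]
    ring
  apply funext_of_extW
  intro j hj
  rcases le_or_gt j (tauW n w) with hcase | hcase
  · rw [extW_invV n (vervaatW n w) (KW n w) hj, if_pos (by omega)]
    rw [extW_vervaat' n w hw (j := j + KW n w) (by unfold KW; omega) (by omega),
        show tauW n w + (j + KW n w) - n = j from by unfold KW; omega, hvK]
    ring
  · rw [extW_invV' n (vervaatW n w) hv0 hKn hj (by omega), hK]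
    rw [extW_vervaat n w (j := j - tauW n w) (by omega),
        if_pos (by rw [KW] at *; omega),
        show tauW n w + (j - tauW n w) = j from by omega,
        extW_vervaat_n n w hw, hvK]
    ring

end LeftInv

end VervaatAux


/-- For `n ≥ 1`, the map `w ↦ (V(w), K(w))` is a bijection from the
set of simple walks of length `n` onto the set of pairs `(v, k)` where `v` is a simple
walk of length `n`, `0 ≤ k ≤ n`, `v(j) ≥ 0` for `0 ≤ j ≤ k`, and `v(j) > v(n)` for
`k ≤ j < n`. -/
theorem vervaat_bijection (n : ℕ) (hn : 1 ≤ n) :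
    Set.BijOn (fun w => (vervaatW n w, KW n w))
      {w : Fin (n + 1) → ℤ | IsSimpleWalk n w}
      {vk : (Fin (n + 1) → ℤ) × ℕ |
        IsSimpleWalk n vk.1 ∧ vk.2 ≤ n ∧
        (∀ j : ℕ, j ≤ vk.2 → 0 ≤ extW n vk.1 j) ∧
        (∀ j : ℕ, vk.2 ≤ j → j < n → extW n vk.1 n < extW n vk.1 j)} := by
  refine Set.InvOn.bijOn (f' := fun vk => VervaatAux.invV n vk.1 vk.2) ?_ ?_ ?_
  · constructor
    · intro w hw
      exact VervaatAux.invV_vervaat n w hw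
    · rintro ⟨v, k⟩ ⟨hv, hk, hpos, hgt⟩
      exact Prod.ext (VervaatAux.vervaat_invV n hn v hv hk hpos hgt)
        (VervaatAux.KW_invV n v hv hk hpos hgt)
  · intro w hw
    have h2 : KW n w ≤ n := by unfold KW; omega
    exact ⟨VervaatAux.vervaat_isWalk n hn w hw, h2,
      fun j hj => VervaatAux.vervaat_nonneg n w hj,
      fun j hj hjn => VervaatAux.vervaat_gt n w hw hj hjn⟩
  · rintro ⟨v, k⟩ ⟨hv, hk, hpos, hgt⟩
    exact VervaatAux.invV_isWalk n hn v hv hk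
end

section
/- Let n ≥ 1 and let a < 0 be an integer with a ≡ n (mod 2). Let v be a simple walk of length n with v(n) = a such that, writing Z(v) := min{j ≥ 0 : v(j) = −1} for the first hitting time of −1 by v, one has v(j) ≥ 0 for all 0 ≤ j < Z(v) and v(j) > a for all 0 ≤ j < n. Then the number of simple walks w of length n with w(n) = a and V(w) = v is exactly Z(v). -/
/-- First hitting time of `−1` by a walk `v` of length `n` (within `{0,…,n}`). -/
noncomputable def ZW (n : ℕ) (v : Fin (n + 1) → ℤ) : ℕ :=
  sInf {j | j ≤ n ∧ extW n v j = -1}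

lemma extW_apply (n : ℕ) (w : Fin (n + 1) → ℤ) (i : Fin (n + 1)) :
    extW n w (i : ℕ) = w i := by
  simp [extW, Nat.min_eq_left (Nat.lt_succ_iff.mp i.isLt)]

lemma extW_zero (n : ℕ) (w : Fin (n + 1) → ℤ) : extW n w 0 = w 0 := by
  simpa using extW_apply n w 0

lemma funext_of_extW {n : ℕ} {w₁ w₂ : Fin (n + 1) → ℤ}
    (h : ∀ j ≤ n, extW n w₁ j = extW n w₂ j) : w₁ = w₂ := by
  funext i
  have := h i (Nat.lt_succ_iff.mp i.isLt)
  rwa [extW_apply, extW_apply] at this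

lemma step_cases {n : ℕ} {w : Fin (n + 1) → ℤ} (hw : IsSimpleWalk n w)
    {j : ℕ} (h1 : 1 ≤ j) (h2 : j ≤ n) :
    extW n w j = extW n w (j - 1) + 1 ∨ extW n w j = extW n w (j - 1) - 1 := by
  have := hw.2 j h1 h2
  rcases (abs_eq (by norm_num : (0:ℤ) ≤ 1)).mp this with h | h
  · left; linarith
  · right; linarith

lemma exists_hit {n : ℕ} {v : Fin (n + 1) → ℤ} (hv : IsSimpleWalk n v)
    (hneg : extW n v n ≤ -1) : ∃ j ≤ n, extW n v j = -1 := by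
  classical
  set S : Set ℕ := {j | j ≤ n ∧ extW n v j ≤ -1} with hS
  have hne : S.Nonempty := ⟨n, le_refl n, hneg⟩
  obtain ⟨hTn, hTv⟩ := Nat.sInf_mem hne
  set T := sInf S with hT
  have hT0 : T ≠ 0 := by
    intro h
    rw [h] at hTv
    rw [extW_zero, hv.1] at hTv
    norm_num at hTv
  have h1T : 1 ≤ T := Nat.one_le_iff_ne_zero.mpr hT0
  have hprev : ¬ (T - 1 ∈ S) := Nat.notMem_of_lt_sInf (by omega)
  have hprevge : 0 ≤ extW n v (T - 1) := by
    by_contra h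
    exact hprev ⟨by omega, by omega⟩
  rcases step_cases hv h1T hTn with h | h
  · exfalso; omega
  · exact ⟨T, hTn, by omega⟩

lemma tauW_eq {n : ℕ} {w : Fin (n + 1) → ℤ} {m : ℕ} (hm : m ≤ n)
    (hmin : ∀ i ≤ n, extW n w m ≤ extW n w i)
    (hstrict : ∀ i < m, extW n w m < extW n w i) : tauW n w = m := by
  have hmem : m ∈ {j | j ≤ n ∧ ∀ i ≤ n, extW n w j ≤ extW n w i} := ⟨hm, hmin⟩
  refine le_antisymm (Nat.sInf_le hmem) ?_
  obtain ⟨htn, htm⟩ := Nat.sInf_mem ⟨m, hmem⟩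
  by_contra h
  have hlt : tauW n w < m := by omega
  exact absurd (htm m hm) (not_le.mpr (hstrict _ hlt))

lemma tauW_spec (n : ℕ) (w : Fin (n + 1) → ℤ) :
    tauW n w ≤ n ∧ (∀ i ≤ n, extW n w (tauW n w) ≤ extW n w i) ∧
      ∀ i < tauW n w, extW n w (tauW n w) < extW n w i := by
  obtain ⟨m, hm, hmin⟩ : ∃ m, m ∈ Finset.range (n+1) ∧
      ∀ i ∈ Finset.range (n+1), extW n w m ≤ extW n w i :=
    Finset.exists_min_image (Finset.range (n+1)) (fun j => extW n w j) ⟨0, by simp⟩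
  have hmem : m ∈ {j | j ≤ n ∧ ∀ i ≤ n, extW n w j ≤ extW n w i} := by
    refine ⟨by simpa [Nat.lt_succ_iff] using hm, fun i hi => hmin i ?_⟩
    simpa [Nat.lt_succ_iff] using hi
  obtain ⟨htn, htm⟩ := Nat.sInf_mem (⟨m, hmem⟩ : Set.Nonempty _)
  refine ⟨htn, htm, fun i hi => ?_⟩
  have hnotmem : i ∉ {j | j ≤ n ∧ ∀ i ≤ n, extW n w j ≤ extW n w i} :=
    Nat.notMem_of_lt_sInf hi
  have hin : i ≤ n := le_trans (le_of_lt hi) htn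
  simp only [Set.mem_setOf_eq, not_and, not_forall] at hnotmem
  obtain ⟨i', hi', hlt⟩ := hnotmem hin
  exact lt_of_le_of_lt (htm i' hi') (not_le.mp hlt)

/-- rotation of `v` at point `s` -/
noncomputable def rotN (n : ℕ) (v : Fin (n + 1) → ℤ) (s : ℕ) : Fin (n + 1) → ℤ :=
  fun i =>
    if (i : ℕ) ≤ n - s then extW n v (s + i) - extW n v s
    else extW n v (s + i - n) + extW n v n - extW n v s

lemma extW_rotN (n : ℕ) (v : Fin (n + 1) → ℤ) (s j : ℕ) (hj : j ≤ n) :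
    extW n (rotN n v s) j =
      if j ≤ n - s then extW n v (s + j) - extW n v s
      else extW n v (s + j - n) + extW n v n - extW n v s := by
  simp [extW, rotN, Nat.min_eq_left hj]

section Main

variable {n : ℕ} {a : ℤ} {v : Fin (n + 1) → ℤ}

lemma rot_walk (hv : IsSimpleWalk n v) (hs : s ≤ n) : IsSimpleWalk n (rotN n v s) := by
  constructor
  · have h0 : (0 : Fin (n+1)).val = 0 := rfl
    simp [rotN, h0]
  · intro j h1 h2
    rw [extW_rotN n v s j h2, extW_rotN n v s (j-1) (by omega)]
    by_cases hb : j ≤ n - s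
    · have hb' : j - 1 ≤ n - s := by omega
      rw [if_pos hb, if_pos hb']
      have h := hv.2 (s + j) (by omega) (by omega)
      have he : s + j - 1 = s + (j - 1) := by omega
      rw [he] at h
      have : extW n v (s + j) - extW n v s - (extW n v (s + (j-1)) - extW n v s)
          = extW n v (s + j) - extW n v (s + (j-1)) := by ring
      rw [this]; exact h
    · rw [if_neg hb]
      by_cases hb' : j - 1 ≤ n - s
      · -- boundary: j - 1 = n - s, j = n - s + 1
        have hj : j = n - s + 1 := by omega
        rw [if_pos hb']
        have h1e : s + j - n = 1 := by omega
        have h2e : s + (j - 1) = n := by omega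
        rw [h1e, h2e]
        have h := hv.2 1 le_rfl (by omega)
        have h0 : extW n v (1 - 1) = 0 := by
          rw [show (1:ℕ) - 1 = 0 from rfl, extW_zero, hv.1]
        rw [h0] at h
        have : extW n v 1 + extW n v n - extW n v s - (extW n v n - extW n v s)
            = extW n v 1 - 0 := by ring
        rw [this]; exact h
      · rw [if_neg hb']
        have h := hv.2 (s + j - n) (by omega) (by omega)
        have he : s + j - n - 1 = s + (j - 1) - n := by omega
        rw [he] at h
        have : extW n v (s + j - n) + extW n v n - extW n v s -
            (extW n v (s + (j-1) - n) + extW n v n - extW n v s)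
            = extW n v (s + j - n) - extW n v (s + (j-1) - n) := by ring
        rw [this]; exact h

lemma rot_end (hv : IsSimpleWalk n v) (hvn : extW n v n = a) (hs : s ≤ n) :
    extW n (rotN n v s) n = a := by
  rw [extW_rotN n v s n le_rfl]
  by_cases hb : n ≤ n - s
  · have hs0 : s = 0 := by omega
    rw [if_pos hb, hs0]
    simp [hvn, extW_zero, hv.1]
  · rw [if_neg hb]
    have he : s + n - n = s := by omega
    rw [he, hvn]; ring

lemma ZW_mem (hv : IsSimpleWalk n v) (hvn : extW n v n = a) (ha : a < 0) :
    ZW n v ≤ n ∧ extW n v (ZW n v) = -1 := by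
  obtain ⟨j, hj, hje⟩ := exists_hit hv (by omega)
  have hne : ({j | j ≤ n ∧ extW n v j = -1} : Set ℕ).Nonempty := ⟨j, ⟨hj, hje⟩⟩
  exact Nat.sInf_mem hne

lemma ZW_pos (hv : IsSimpleWalk n v) (hvn : extW n v n = a) (ha : a < 0) :
    1 ≤ ZW n v := by
  obtain ⟨_, hZv⟩ := ZW_mem hv hvn ha
  by_contra h
  have h0 : ZW n v = 0 := by omega
  rw [h0, extW_zero, hv.1] at hZv
  norm_num at hZv

lemma rot_tau (hv : IsSimpleWalk n v) (hvn : extW n v n = a) (ha : a < 0)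
    (hpos : ∀ j : ℕ, j < ZW n v → 0 ≤ extW n v j)
    (hgt : ∀ j : ℕ, j < n → a < extW n v j)
    (hs : s < ZW n v) : tauW n (rotN n v s) = n - s := by
  have hZn := (ZW_mem hv hvn ha).1
  have hsn : s ≤ n := by omega
  have hval : extW n (rotN n v s) (n - s) = a - extW n v s := by
    rw [extW_rotN n v s (n - s) (by omega), if_pos le_rfl,
      show s + (n - s) = n from by omega, hvn]
  have hvge : ∀ j ≤ n, a ≤ extW n v j := by
    intro j hj
    rcases lt_or_eq_of_le hj with h | h
    · exact le_of_lt (hgt j h)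
    · rw [h, hvn]
  refine tauW_eq (by omega) ?_ ?_
  · intro i hi
    rw [hval, extW_rotN n v s i hi]
    by_cases hb : i ≤ n - s
    · rw [if_pos hb]
      have := hvge (s + i) (by omega)
      linarith
    · rw [if_neg hb]
      have hm : s + i - n < ZW n v := by omega
      have := hpos (s + i - n) hm
      rw [hvn]; linarith
  · intro i hi
    rw [hval, extW_rotN n v s i (by omega), if_pos (by omega)]
    have := hgt (s + i) (by omega)
    linarith

lemma extW_vervaatW (n : ℕ) (w : Fin (n + 1) → ℤ) (j : ℕ) (hj : j ≤ n) :
    extW n (vervaatW n w) j =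
      if j ≤ n - tauW n w then extW n w (tauW n w + j) - extW n w (tauW n w)
      else extW n w (tauW n w + j - n) + extW n w n - extW n w (tauW n w) := by
  simp [extW, vervaatW, Nat.min_eq_left hj]

lemma rot_vervaat (hv : IsSimpleWalk n v) (hvn : extW n v n = a) (ha : a < 0)
    (hpos : ∀ j : ℕ, j < ZW n v → 0 ≤ extW n v j)
    (hgt : ∀ j : ℕ, j < n → a < extW n v j)
    (hs : s < ZW n v) : vervaatW n (rotN n v s) = v := by
  have hZn := (ZW_mem hv hvn ha).1
  have hsn : s ≤ n := by omega
  have htau : tauW n (rotN n v s) = n - s := rot_tau hv hvn ha hpos hgt hs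
  apply funext_of_extW
  intro k hk
  rw [extW_vervaatW n (rotN n v s) k hk, htau, show n - (n - s) = s from by omega]
  by_cases hb : k ≤ s
  · rw [if_pos hb]
    by_cases hk0 : k = 0
    · rw [hk0]
      simp only [Nat.add_zero]
      rw [extW_zero, hv.1, sub_self]
    · rw [extW_rotN n v s (n - s + k) (by omega), if_neg (by omega),
        extW_rotN n v s (n - s) (by omega), if_pos le_rfl,
        show s + (n - s + k) - n = k from by omega,
        show s + (n - s) = n from by omega]
      ring
  · rw [if_neg hb]
    rw [extW_rotN n v s (n - s + k - n) (by omega), if_pos (by omega),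
      rot_end hv hvn hsn,
      extW_rotN n v s (n - s) (by omega), if_pos le_rfl,
      show s + (n - s + k - n) = k from by omega,
      show s + (n - s) = n from by omega, hvn]
    ring

lemma fiber_eq (hv : IsSimpleWalk n v) (hvn : extW n v n = a) (ha : a < 0)
    (hpos : ∀ j : ℕ, j < ZW n v → 0 ≤ extW n v j)
    (hgt : ∀ j : ℕ, j < n → a < extW n v j) :
    {w : Fin (n + 1) → ℤ | IsSimpleWalk n w ∧ extW n w n = a ∧ vervaatW n w = v}
      = rotN n v '' (Set.Iio (ZW n v)) := by
  have hZn := (ZW_mem hv hvn ha).1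
  have hZv := (ZW_mem hv hvn ha).2
  have hZ1 := ZW_pos hv hvn ha
  ext w
  constructor
  · rintro ⟨hw, hwn, hV⟩
    set τ := tauW n w with hτdef
    obtain ⟨hτn, hτmin, hτstrict⟩ := tauW_spec n w
    set s := n - τ with hsdef
    have hns : n - s = τ := by omega
    have hVk : ∀ k ≤ n,
        (if k ≤ n - τ then extW n w (τ + k) - extW n w τ
          else extW n w (τ + k - n) + extW n w n - extW n w τ) = extW n v k := by
      intro k hk
      rw [← extW_vervaatW n w k hk, hV]
    have hwτ : extW n w τ = a - extW n v s := by
      have h := hVk s (by omega)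
      rw [if_pos (by omega), show τ + s = n from by omega, hwn] at h
      linarith
    have weq : w = rotN n v s := by
      apply funext_of_extW
      intro k hk
      rw [extW_rotN n v s k hk, hns]
      by_cases hb : k ≤ τ
      · rw [if_pos hb]
        by_cases hk0 : k = 0
        · rw [hk0, extW_zero, hw.1]
          simp only [Nat.add_zero]
          rw [sub_self]
        · have h := hVk (s + k) (by omega)
          rw [if_neg (by omega), show τ + (s + k) - n = k from by omega, hwn] at h
          linarith
      · rw [if_neg hb]
        have h := hVk (k - τ) (by omega)
        rw [if_pos (by omega), show τ + (k - τ) = k from by omega] at h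
        rw [show s + k - n = k - τ from by omega, hvn]
        linarith
    have hvm : ∀ m, 1 ≤ m → m ≤ s → 0 ≤ extW n v m := by
      intro m h1 h2
      have hkn : m + τ ≤ n := by omega
      have hge := hτmin (m + τ) hkn
      have hwk : extW n w (m + τ) = extW n v m + a - extW n v s := by
        rw [weq, extW_rotN n v s (m + τ) hkn, hns, if_neg (by omega),
          show s + (m + τ) - n = m from by omega, hvn]
      rw [hwk, hwτ] at hge
      linarith
    have hsZ : s < ZW n v := by
      by_contra h
      have := hvm (ZW n v) (by omega) (by omega)
      rw [hZv] at this
      norm_num at this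
    exact ⟨s, hsZ, weq.symm⟩
  · rintro ⟨s, hs, rfl⟩
    have hs' : s < ZW n v := hs
    exact ⟨rot_walk hv (by omega), rot_end hv hvn (by omega),
      rot_vervaat hv hvn ha hpos hgt hs'⟩

end Main

/-- Let `n ≥ 1` and `a < 0` with `a ≡ n (mod 2)`.  If `v` is a simple
walk of length `n` with `v(n) = a`, `v(j) ≥ 0` for `0 ≤ j < Z(v)` (where `Z(v)` is the
first hitting time of `−1` by `v`) and `v(j) > a` for `0 ≤ j < n`, then the number of
simple walks `w` of length `n` with `w(n) = a` and `V(w) = v` is exactly `Z(v)`. -/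
theorem card_vervaat_fiber (n : ℕ) (hn : 1 ≤ n) (a : ℤ) (ha : a < 0)
    (hpar : a % 2 = (n : ℤ) % 2)
    (v : Fin (n + 1) → ℤ) (hv : IsSimpleWalk n v) (hvn : extW n v n = a)
    (hpos : ∀ j : ℕ, j < ZW n v → 0 ≤ extW n v j)
    (hgt : ∀ j : ℕ, j < n → a < extW n v j) :
    {w : Fin (n + 1) → ℤ |
        IsSimpleWalk n w ∧ extW n w n = a ∧ vervaatW n w = v}.ncard = ZW n v := by
  have hZn := (ZW_mem hv hvn ha).1
  rw [fiber_eq hv hvn ha hpos hgt]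
  have hinj : Set.InjOn (rotN n v) (Set.Iio (ZW n v)) := by
    intro s1 hs1 s2 hs2 heq
    have h1 : tauW n (rotN n v s1) = n - s1 := rot_tau hv hvn ha hpos hgt hs1
    have h2 : tauW n (rotN n v s2) = n - s2 := rot_tau hv hvn ha hpos hgt hs2
    rw [heq] at h1
    have hs1n : s1 ≤ n := by
      have : s1 < ZW n v := hs1
      omega
    have hs2n : s2 ≤ n := by
      have : s2 < ZW n v := hs2
      omega
    omega
  rw [Set.ncard_image_of_injOn hinj, ← Finset.coe_range, Set.ncard_coe_finset,
    Finset.card_range]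
end

section
/- Let (k_n) be a sequence of natural numbers with k_n ≡ n (mod 2) and k_n/√n → μ ≥ 0 as n → ∞. Then C(n, (n+k_n)/2) is asymptotically equivalent to √(2/(πn)) · 2^n · exp(−μ²/2), i.e. the ratio of the two sides converges to 1 as n → ∞. -/
open Filter Real

/-! Write `a = n (1 + t) / 2`. Stirling's formula `m! = s m * √(2m) * (m/e)^m`, with `s m → √π`,
gives exactly
`C(n, a) = s n / (s a * s (n - a)) * √(2 / (n (1 - t²))) * 2^n * exp (-n * klHalf t)`,
where `klHalf t` is the Kullback–Leibler divergence of a `(1 + t)/2`-coin from a fair coin.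
Expanding `log (1 ± t)` to second order, `klHalf t = t²/2 + O(t³)`, so `n * klHalf t → ξ²/2`
when `√n * t = (2a - n)/√n → ξ`; and `t → 0` leaves `√(2 / (π n))` from the square root and
`1/√π` from the Stirling factors. -/

open Asymptotics Topology

noncomputable def klHalf (t : ℝ) : ℝ := ((1 + t) * log (1 + t) + (1 - t) * log (1 - t)) / 2

lemma abs_klHalf_sub_sq_le {t : ℝ} (ht : |t| < 1) :
    |klHalf t - t ^ 2 / 2| ≤ |t| ^ 3 / (1 - |t|) := by
  have hplus := abs_log_sub_add_sum_range_le (x := -t) (by rwa [abs_neg]) 2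
  have hminus := abs_log_sub_add_sum_range_le ht 2
  simp only [Finset.sum_range_succ, Finset.sum_range_zero, abs_neg, sub_neg_eq_add, even_two,
    Even.neg_pow, Nat.cast_one, Nat.cast_zero, zero_add, pow_one, one_add_one_eq_two,
    div_one] at hplus hminus
  have hp : 0 ≤ 1 + t := by linarith [neg_abs_le t]
  have hm : 0 ≤ 1 - t := by linarith [le_abs_self t]
  have hdecomp : klHalf t - t ^ 2 / 2 = ((1 + t) * (-t + t ^ 2 / 2 + log (1 + t))
      + (1 - t) * (t + t ^ 2 / 2 + log (1 - t))) / 2 := by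
    unfold klHalf; ring
  rw [hdecomp, abs_div, abs_two, div_le_iff₀ two_pos]
  calc _ ≤ (1 + t) * |-t + t ^ 2 / 2 + log (1 + t)| + (1 - t) * |t + t ^ 2 / 2 + log (1 - t)| :=
        (abs_add_le _ _).trans_eq (by rw [abs_mul, abs_mul, abs_of_nonneg hp, abs_of_nonneg hm])
    _ ≤ (1 + t) * (|t| ^ 3 / (1 - |t|)) + (1 - t) * (|t| ^ 3 / (1 - |t|)) := by gcongr
    _ = _ := by ring

lemma klHalf_isEquivalent : klHalf ~[𝓝 0] fun t => t ^ 2 / 2 := by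
  have hcube : (fun t => klHalf t - t ^ 2 / 2) =O[𝓝 0] fun t : ℝ => t ^ 3 := by
    refine IsBigO.of_bound 2 ?_
    filter_upwards [Metric.ball_mem_nhds (0 : ℝ) (by norm_num : (0 : ℝ) < 1 / 2)] with t ht
    rw [mem_ball_zero_iff, Real.norm_eq_abs] at ht
    rw [Real.norm_eq_abs, norm_pow, Real.norm_eq_abs]
    refine (abs_klHalf_sub_sq_le (by linarith)).trans ?_
    rw [div_le_iff₀ (by linarith)]
    nlinarith [pow_nonneg (abs_nonneg t) 3]
  have hhalf : (fun t : ℝ => t ^ 2) =O[𝓝 0] fun t => t ^ 2 / 2 :=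
    (isBigO_const_mul_self 2 _ _).congr_left fun t => by ring
  exact hcube.trans_isLittleO ((isLittleO_pow_pow (by norm_num : 2 < 3)).trans_isBigO hhalf)

lemma tendsto_div_sqrt_natCast_zero {x : ℕ → ℝ} {ξ : ℝ} (hx : Tendsto x atTop (𝓝 ξ)) :
    Tendsto (fun n : ℕ => x n / √n) atTop (𝓝 0) := by
  simpa [div_eq_mul_inv] using
    hx.mul ((tendsto_inv_atTop_zero.comp tendsto_sqrt_atTop).comp tendsto_natCast_atTop_atTop)

lemma tendsto_natCast_mul_klHalf {x : ℕ → ℝ} {ξ : ℝ} (hx : Tendsto x atTop (𝓝 ξ)) :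
    Tendsto (fun n : ℕ => n * klHalf (x n / √n)) atTop (𝓝 (ξ ^ 2 / 2)) := by
  have hequiv := (IsEquivalent.refl (u := fun n : ℕ => (n : ℝ))).mul
    (klHalf_isEquivalent.comp_tendsto (tendsto_div_sqrt_natCast_zero hx))
  refine hequiv.symm.tendsto_nhds ((hx.pow 2).div_const 2 |>.congr' ?_)
  filter_upwards [eventually_ne_atTop 0] with n hn
  simp only [Pi.mul_apply, Function.comp_apply, div_pow, Real.sq_sqrt (Nat.cast_nonneg n)]
  field_simp

open Nat in
lemma factorial_eq_stirlingSeq_mul {m : ℕ} (hm : m ≠ 0) :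
    (m ! : ℝ) = Stirling.stirlingSeq m * (√(2 * m) * (m / exp 1) ^ m) := by
  rw [Stirling.stirlingSeq, div_mul_cancel₀]
  positivity

lemma add_choose_eq_stirlingSeq {a b : ℕ} (ha : a ≠ 0) (hb : b ≠ 0) :
    ((a + b).choose a : ℝ) =
      Stirling.stirlingSeq (a + b) / (Stirling.stirlingSeq a * Stirling.stirlingSeq b)
        * (√(2 * (a + b)) / (√(2 * a) * √(2 * b)))
        * ((a + b : ℝ) ^ (a + b) / ((a : ℝ) ^ a * (b : ℝ) ^ b)) := by
  rw [Nat.cast_add_choose, factorial_eq_stirlingSeq_mul (by omega),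
    factorial_eq_stirlingSeq_mul ha, factorial_eq_stirlingSeq_mul hb, div_pow, div_pow, div_pow, pow_add (exp 1)]
  push_cast
  field_simp

lemma log_two_mul_div {x y : ℝ} (hx : 0 < x) (hy : 0 < y) :
    log (2 * x / y) = log 2 + log x - log y := by
  rw [log_div (by positivity) hy.ne', log_mul two_ne_zero hx.ne']

lemma add_pow_add_div_pow_mul_pow {a b : ℕ} (ha : a ≠ 0) (hb : b ≠ 0) {t : ℝ}
    (ht : 2 * (a : ℝ) = (a + b) * (1 + t)) :
    (a + b : ℝ) ^ (a + b) / ((a : ℝ) ^ a * (b : ℝ) ^ b) =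
      2 ^ (a + b) * exp (-((a + b) * klHalf t)) := by
  have ha' : (0 : ℝ) < a := by positivity
  have hb' : (0 : ℝ) < b := by positivity
  have hn : (0 : ℝ) < a + b := by positivity
  have hplus : 1 + t = 2 * a / (a + b) := by field_simp; linarith
  have hminus : 1 - t = 2 * b / (a + b) := by field_simp; linarith
  have hlog : log ((a + b : ℝ) ^ (a + b) / ((a : ℝ) ^ a * (b : ℝ) ^ b))
      = (a + b) * log (a + b) - a * log a - b * log b := by
    rw [log_div (by positivity) (by positivity), log_mul (by positivity) (by positivity),
      log_pow, log_pow, log_pow]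
    push_cast
    ring
  rw [← exp_log (by positivity : (0 : ℝ) < (a + b : ℝ) ^ (a + b) / ((a : ℝ) ^ a * (b : ℝ) ^ b)),
    ← exp_log (by positivity : (0 : ℝ) < 2 ^ (a + b)), ← exp_add, hlog, log_pow, klHalf,
    hplus, hminus, log_two_mul_div ha' hn, log_two_mul_div hb' hn]
  congr 1
  field_simp
  push_cast
  ring

lemma sqrt_two_mul_add_div_sqrt_mul_sqrt {x y t : ℝ} (hx : 0 < x) (hy : 0 < y)
    (ht : 2 * x = (x + y) * (1 + t)) :
    √(2 * (x + y)) / (√(2 * x) * √(2 * y)) / √(2 / (π * (x + y))) = √(π / (1 - t ^ 2)) := by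
  have ht' : 1 - t ^ 2 = 2 * x * (2 * y) / (x + y) ^ 2 := by
    rw [show t = 2 * x / (x + y) - 1 by field_simp; linarith]
    field_simp
    ring
  rw [← sqrt_mul (by positivity), ← sqrt_div' _ (by positivity), ← sqrt_div' _ (by positivity),
    ht']
  congr 1
  field_simp

lemma choose_div_gaussian_eq {n a : ℕ} (ha : a ≠ 0) (han : a < n) {t : ℝ}
    (ht : 2 * (a : ℝ) = n * (1 + t)) (ξ : ℝ) :
    (n.choose a : ℝ) / (√(2 / (π * n)) * 2 ^ n * exp (-ξ ^ 2 / 2)) =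
      Stirling.stirlingSeq n / (Stirling.stirlingSeq a * Stirling.stirlingSeq (n - a))
        * √(π / (1 - t ^ 2)) * exp (ξ ^ 2 / 2 - n * klHalf t) := by
  obtain ⟨b, rfl⟩ : ∃ b, n = a + b := ⟨n - a, by omega⟩
  have hb : b ≠ 0 := by omega
  have hexp : exp (ξ ^ 2 / 2 - (a + b) * klHalf t) =
      exp (-((a + b) * klHalf t)) / exp (-ξ ^ 2 / 2) := by
    rw [← exp_sub]
    ring_nf
  push_cast at ht ⊢
  rw [Nat.add_sub_cancel_left, add_choose_eq_stirlingSeq ha hb,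
    add_pow_add_div_pow_mul_pow ha hb ht, ← sqrt_two_mul_add_div_sqrt_mul_sqrt (by positivity) (by positivity) ht, hexp]
  field_simp

lemma tendsto_atTop_of_natCast_eq_mul {u : ℕ → ℕ} {f : ℕ → ℝ} {p : ℝ} (hp : 0 < p)
    (hf : Tendsto f atTop (𝓝 p)) (hu : ∀ᶠ n in atTop, (u n : ℝ) = n * f n) :
    Tendsto u atTop atTop :=
  tendsto_natCast_atTop_iff.1 <|
    (tendsto_natCast_atTop_atTop.atTop_mul_pos hp hf).congr' (hu.mono fun _ hn => hn.symm)

theorem tendsto_choose_div_gaussian {a : ℕ → ℕ} {ξ : ℝ}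
    (h : Tendsto (fun n : ℕ => (2 * (a n : ℝ) - n) / √n) atTop (𝓝 ξ)) :
    Tendsto (fun n : ℕ => (n.choose (a n) : ℝ) / (√(2 / (π * n)) * 2 ^ n * exp (-ξ ^ 2 / 2)))
      atTop (𝓝 1) := by
  set t : ℕ → ℝ := fun n => (2 * (a n : ℝ) - n) / √n / √n with ht_def
  have ht : Tendsto t atTop (𝓝 0) := tendsto_div_sqrt_natCast_zero h
  have h2a : ∀ᶠ n : ℕ in atTop, 2 * (a n : ℝ) = n * (1 + t n) := by
    filter_upwards [eventually_ne_atTop 0] with n hn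
    simp only [ht_def]
    rw [div_div, mul_self_sqrt (Nat.cast_nonneg n)]
    field_simp
    ring
  have hlt : ∀ᶠ n in atTop, a n < n := by
    filter_upwards [h2a, ht.eventually (gt_mem_nhds one_pos), eventually_gt_atTop 0]
      with n h2a ht1 hn
    have : (a n : ℝ) < n := by nlinarith [(Nat.cast_pos (α := ℝ)).2 hn]
    exact_mod_cast this
  have ha : Tendsto a atTop atTop := by
    refine tendsto_atTop_of_natCast_eq_mul (f := fun n => (1 + t n) / 2) (by norm_num)
      ((ht.const_add 1).div_const 2) ?_
    filter_upwards [h2a] with n h2a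
    linarith
  have hb : Tendsto (fun n => n - a n) atTop atTop := by
    refine tendsto_atTop_of_natCast_eq_mul (f := fun n => (1 - t n) / 2) (by norm_num)
      ((ht.const_sub 1).div_const 2) ?_
    filter_upwards [h2a, hlt] with n h2a hlt
    rw [Nat.cast_sub hlt.le]
    linarith
  have hS := Stirling.tendsto_stirlingSeq_sqrt_pi
  have hstirling := hS.div ((hS.comp ha).mul (hS.comp hb)) (by positivity)
  have hsqrt := (tendsto_const_nhds (x := π)).div ((ht.pow 2).const_sub 1) (by norm_num) |>.sqrt
  have hexp := ((tendsto_natCast_mul_klHalf h).const_sub (ξ ^ 2 / 2)).rexp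
  have hlim : √π / (√π * √π) * √(π / (1 - 0 ^ 2)) * exp (ξ ^ 2 / 2 - ξ ^ 2 / 2) = 1 := by
    simp [(sqrt_pos.2 pi_pos).ne']
  rw [← hlim]
  refine ((hstirling.mul hsqrt).mul hexp).congr' ?_
  filter_upwards [h2a, hlt, ha.eventually_ne_atTop 0] with n h2a hlt ha0
  exact (choose_div_gaussian_eq ha0 hlt h2a ξ).symm

theorem binomial_asymptotics_general (μ : ℝ) (k : ℕ → ℕ)
    (hpar : ∀ n, k n % 2 = n % 2)
    (hconv : Tendsto (fun n : ℕ => (k n : ℝ) / Real.sqrt n) atTop (nhds μ)) :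
    Tendsto (fun n : ℕ =>
        (Nat.choose n ((n + k n) / 2) : ℝ)
          / (Real.sqrt (2 / (Real.pi * n)) * 2 ^ n * Real.exp (-μ ^ 2 / 2)))
      atTop (nhds 1) := by
  have htwice (n : ℕ) : 2 * (((n + k n) / 2 : ℕ) : ℝ) - n = k n := by
    have : 2 * ((n + k n) / 2) = n + k n := by have := hpar n; omega
    rw [← Nat.cast_ofNat, ← Nat.cast_mul, this]
    push_cast
    ring
  exact tendsto_choose_div_gaussian (hconv.congr fun n => by rw [htwice])

/-- If `k_n ≡ n (mod 2)` and `k_n/√n → μ ≥ 0`, then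
`C(n, (n+k_n)/2) ∼ √(2/(πn)) · 2^n · exp(−μ²/2)`, i.e. the ratio tends to `1`. -/
theorem binomial_asymptotics (μ : ℝ) (hμ : 0 ≤ μ) (k : ℕ → ℕ)
    (hpar : ∀ n, k n % 2 = n % 2)
    (hconv : Tendsto (fun n : ℕ => (k n : ℝ) / Real.sqrt n) atTop (nhds μ)) :
    Tendsto (fun n : ℕ =>
        (Nat.choose n ((n + k n) / 2) : ℝ)
          / (Real.sqrt (2 / (Real.pi * n)) * 2 ^ n * Real.exp (-μ ^ 2 / 2)))
      atTop (nhds 1) :=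
  binomial_asymptotics_general μ k hpar hconv
end

section
/- For every λ < 0, ∫_0^1 t · (|λ|/√(2π t (1−t)³)) · exp(−λ² t /(2(1−t))) dt = 1 − |λ| · exp(λ²/2) · ∫_{|λ|}^∞ exp(−s²/2) ds. -/
/-!
With `a = |λ|`, the substitution `t = s² / (s² + a²)` carries `f_Z(t) dt` to the half-normal
density `2 φ(s) ds` on `(0, ∞)`, so the mean is `1 - a² E[1 / (S² + a²)]` for a half-normal
`S`. That expectation is a Mills-ratio integral: integrating `t exp(-(s² + a²) t² / (2a²))` over
`(0, ∞) × (a, ∞)` in both orders gives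
`∫₀^∞ e^{-s²/2} / (s² + a²) ds = √(2π) / (2a) · e^{a²/2} ∫ₐ^∞ e^{-t²/2} dt`.
-/

open MeasureTheory Real Set Filter Topology

lemma integrable_exp_neg_sq_div_two : Integrable fun s : ℝ => exp (-s ^ 2 / 2) := by
  convert integrable_exp_neg_mul_sq (b := 1 / 2) (by norm_num) using 3
  ring

lemma integral_Ioi_exp_neg_sq_div_two :
    ∫ s in Ioi (0 : ℝ), exp (-s ^ 2 / 2) = √(2 * π) / 2 := by
  convert integral_gaussian_Ioi (1 / 2) using 4
  · ring
  · ring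

lemma integrable_exp_neg_sq_div_two_div_sq_add_sq {a : ℝ} (ha : a ≠ 0) :
    Integrable fun s : ℝ => exp (-s ^ 2 / 2) / (s ^ 2 + a ^ 2) := by
  refine (integrable_exp_neg_sq_div_two.div_const (a ^ 2)).mono'
    (by fun_prop (disch := intro s; positivity) : Continuous _).aestronglyMeasurable
    (ae_of_all _ fun s => ?_)
  rw [norm_of_nonneg (by positivity)]
  gcongr
  exact le_add_of_nonneg_left (sq_nonneg s)

lemma integral_Ioi_mul_exp_neg_mul_sq {c : ℝ} (hc : 0 < c) (b : ℝ) :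
    ∫ t in Ioi b, t * exp (-c * t ^ 2) = exp (-c * b ^ 2) / (2 * c) := by
  have hderiv : ∀ x ∈ Ici b,
      HasDerivAt (fun t => -exp (-c * t ^ 2) / (2 * c)) (x * exp (-c * x ^ 2)) x := by
    intro x _
    refine ((((hasDerivAt_pow 2 x).const_mul (-c)).exp.neg).div_const (2 * c)).congr_deriv ?_
    field_simp
    ring
  have hlim : Tendsto (fun t => -exp (-c * t ^ 2) / (2 * c)) atTop (𝓝 0) := by
    have : Tendsto (fun t : ℝ => -c * t ^ 2) atTop atBot :=
      (tendsto_pow_atTop two_ne_zero).const_mul_atTop_of_neg (neg_neg_of_pos hc)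
    simpa using ((tendsto_exp_atBot.comp this).neg).div_const (2 * c)
  rw [integral_Ioi_of_hasDerivAt_of_tendsto' hderiv
    (integrable_mul_exp_neg_mul_sq hc).integrableOn hlim]
  ring

noncomputable def millsKernel (a s t : ℝ) : ℝ :=
  t * exp (-((s ^ 2 + a ^ 2) / (2 * a ^ 2)) * t ^ 2)

section MillsRatio

variable {a : ℝ}

lemma millsKernel_le (ha : 0 < a) (s : ℝ) {t : ℝ} (ht : a < t) :
    millsKernel a s t ≤ exp (-s ^ 2 / 2) * (t * exp (-t ^ 2 / 2)) := by
  rw [millsKernel, mul_left_comm, ← exp_add]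
  gcongr
  · exact ha.trans ht |>.le
  · have : a ^ 2 < t ^ 2 := by gcongr
    rw [neg_mul, neg_le, div_mul_eq_mul_div, le_div_iff₀ (by positivity)]
    nlinarith [sq_nonneg s]

lemma integrable_millsKernel (ha : 0 < a) :
    Integrable (Function.uncurry (millsKernel a))
      ((volume.restrict (Ioi 0)).prod (volume.restrict (Ioi a))) := by
  have hmul : Integrable fun t : ℝ => t * exp (-t ^ 2 / 2) := by
    convert integrable_mul_exp_neg_mul_sq (b := 1 / 2) (by norm_num) using 4
    ring
  refine (integrable_exp_neg_sq_div_two.restrict.mul_prod hmul.restrict).mono'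
    (by unfold millsKernel; fun_prop : Continuous _).aestronglyMeasurable ?_
  rw [Measure.prod_restrict]
  filter_upwards [ae_restrict_mem (measurableSet_Ioi.prod measurableSet_Ioi)]
    with p ⟨_, hp⟩
  have hp0 : 0 < p.2 := ha.trans hp
  rw [norm_of_nonneg (by unfold millsKernel; exact mul_nonneg hp0.le (exp_pos _).le)]
  exact millsKernel_le ha p.1 hp

lemma integral_millsKernel_right (ha : 0 < a) (s : ℝ) :
    ∫ t in Ioi a, millsKernel a s t
      = a ^ 2 / exp (a ^ 2 / 2) * (exp (-s ^ 2 / 2) / (s ^ 2 + a ^ 2)) := by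
  unfold millsKernel
  rw [integral_Ioi_mul_exp_neg_mul_sq (by positivity),
    show -((s ^ 2 + a ^ 2) / (2 * a ^ 2)) * a ^ 2 = -s ^ 2 / 2 - a ^ 2 / 2 by field_simp; ring,
    exp_sub]
  field_simp

lemma integral_millsKernel_left (ha : 0 < a) {t : ℝ} (ht : 0 < t) :
    ∫ s in Ioi 0, millsKernel a s t = a * √(2 * π) / 2 * exp (-t ^ 2 / 2) := by
  have hsplit (s : ℝ) :
      millsKernel a s t = t * exp (-t ^ 2 / 2) * exp (-(t ^ 2 / (2 * a ^ 2)) * s ^ 2) := by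
    rw [millsKernel, mul_assoc, ← exp_add]
    congr 2
    field_simp
    ring
  have hsqrt : √(π / (t ^ 2 / (2 * a ^ 2))) = a / t * √(2 * π) := by
    rw [show π / (t ^ 2 / (2 * a ^ 2)) = (a / t) ^ 2 * (2 * π) by field_simp,
      sqrt_mul (sq_nonneg _), sqrt_sq (by positivity)]
  simp_rw [hsplit]
  rw [integral_const_mul, integral_gaussian_Ioi, hsqrt]
  field_simp

theorem integral_Ioi_exp_neg_sq_div_two_div_sq_add_sq (ha : 0 < a) :
    ∫ s in Ioi (0 : ℝ), exp (-s ^ 2 / 2) / (s ^ 2 + a ^ 2)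
      = √(2 * π) / (2 * a) * exp (a ^ 2 / 2) * ∫ t in Ioi a, exp (-t ^ 2 / 2) := by
  have hswap := integral_integral_swap (integrable_millsKernel ha)
  rw [setIntegral_congr_fun measurableSet_Ioi
      (fun t ht => integral_millsKernel_left ha (ha.trans ht)),
    integral_congr_ae (ae_of_all _ (integral_millsKernel_right ha)),
    integral_const_mul, integral_const_mul] at hswap
  field_simp at hswap ⊢
  exact hswap

end MillsRatio

noncomputable def zDensity (a t : ℝ) : ℝ :=
  a / √(2 * π * t * (1 - t) ^ 3) * exp (-a ^ 2 * t / (2 * (1 - t)))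

section Substitution

variable {a : ℝ}

lemma hasDerivAt_sq_div_sq_add_sq (ha : a ≠ 0) (s : ℝ) :
    HasDerivAt (fun s => s ^ 2 / (s ^ 2 + a ^ 2)) (2 * a ^ 2 * s / (s ^ 2 + a ^ 2) ^ 2) s := by
  have hpos : 0 < s ^ 2 + a ^ 2 := by positivity
  have hsq : HasDerivAt (fun s : ℝ => s ^ 2) (2 * s) s := by simpa using hasDerivAt_pow 2 s
  refine (hsq.div (hsq.add_const _) hpos.ne').congr_deriv ?_
  field_simp
  ring

lemma strictMonoOn_sq_div_sq_add_sq (ha : a ≠ 0) :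
    StrictMonoOn (fun s => s ^ 2 / (s ^ 2 + a ^ 2)) (Ici 0) := by
  intro x hx y _ hxy
  have hx2 : x ^ 2 < y ^ 2 := by gcongr
  rw [div_lt_div_iff₀ (by positivity) (by positivity)]
  nlinarith [sq_pos_of_ne_zero ha]

lemma image_sq_div_sq_add_sq_Ioi (ha : 0 < a) :
    (fun s => s ^ 2 / (s ^ 2 + a ^ 2)) '' Ioi 0 = Ioo 0 1 := by
  ext t
  constructor
  · rintro ⟨s, hs, rfl⟩
    have hs : 0 < s := hs
    exact ⟨by positivity, (div_lt_one (by positivity)).mpr (by linarith [sq_pos_of_pos ha])⟩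
  · rintro ⟨ht0, ht1⟩
    have h1t : 0 < 1 - t := by linarith
    refine ⟨a * √(t / (1 - t)), mem_Ioi.mpr (by positivity), ?_⟩
    dsimp only
    rw [mul_pow, sq_sqrt (by positivity)]
    field_simp
    ring

lemma abs_deriv_mul_zDensity (ha : 0 < a) {s : ℝ} (hs : 0 < s) :
    |2 * a ^ 2 * s / (s ^ 2 + a ^ 2) ^ 2| * zDensity a (s ^ 2 / (s ^ 2 + a ^ 2))
      = 2 / √(2 * π) * exp (-s ^ 2 / 2) := by
  have hpos : 0 < s ^ 2 + a ^ 2 := by positivity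
  have hsqrt : √(2 * π * (s ^ 2 / (s ^ 2 + a ^ 2)) * (1 - s ^ 2 / (s ^ 2 + a ^ 2)) ^ 3)
      = s * a ^ 3 / (s ^ 2 + a ^ 2) ^ 2 * √(2 * π) := by
    rw [show 2 * π * (s ^ 2 / (s ^ 2 + a ^ 2)) * (1 - s ^ 2 / (s ^ 2 + a ^ 2)) ^ 3
        = (s * a ^ 3 / (s ^ 2 + a ^ 2) ^ 2) ^ 2 * (2 * π) by field_simp; ring,
      sqrt_mul (sq_nonneg _), sqrt_sq (by positivity)]
  have hexp : -a ^ 2 * (s ^ 2 / (s ^ 2 + a ^ 2)) / (2 * (1 - s ^ 2 / (s ^ 2 + a ^ 2)))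
      = -s ^ 2 / 2 := by
    field_simp
    ring
  rw [zDensity, hsqrt, hexp, abs_of_pos (by positivity)]
  field_simp

theorem setIntegral_Ioo_mul_zDensity (ha : 0 < a) (g : ℝ → ℝ) :
    ∫ t in Ioo 0 1, g t * zDensity a t
      = ∫ s in Ioi 0, g (s ^ 2 / (s ^ 2 + a ^ 2)) * (2 / √(2 * π) * exp (-s ^ 2 / 2)) := by
  rw [← image_sq_div_sq_add_sq_Ioi ha, integral_image_eq_integral_abs_deriv_smul measurableSet_Ioi
    (fun s _ => (hasDerivAt_sq_div_sq_add_sq ha.ne' s).hasDerivWithinAt)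
    ((strictMonoOn_sq_div_sq_add_sq ha.ne').injOn.mono Ioi_subset_Ici_self)]
  refine setIntegral_congr_fun measurableSet_Ioi fun s hs => ?_
  rw [smul_eq_mul, mul_left_comm, abs_deriv_mul_zDensity ha hs]

end Substitution

theorem integral_Ioo_mul_zDensity {a : ℝ} (ha : 0 < a) :
    ∫ t in Ioo 0 1, t * zDensity a t
      = 1 - a * exp (a ^ 2 / 2) * ∫ s in Ioi a, exp (-s ^ 2 / 2) := by
  have hsplit (s : ℝ) : s ^ 2 / (s ^ 2 + a ^ 2) * (2 / √(2 * π) * exp (-s ^ 2 / 2))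
      = 2 / √(2 * π) * exp (-s ^ 2 / 2)
        - 2 * a ^ 2 / √(2 * π) * (exp (-s ^ 2 / 2) / (s ^ 2 + a ^ 2)) := by
    have : 0 < s ^ 2 + a ^ 2 := by positivity
    field_simp
    ring
  rw [setIntegral_Ioo_mul_zDensity ha fun t => t]
  simp_rw [hsplit]
  rw [integral_sub (integrable_exp_neg_sq_div_two.const_mul _).integrableOn
      ((integrable_exp_neg_sq_div_two_div_sq_add_sq ha.ne').const_mul _).integrableOn,
    integral_const_mul, integral_const_mul, integral_Ioi_exp_neg_sq_div_two,
    integral_Ioi_exp_neg_sq_div_two_div_sq_add_sq ha]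
  field_simp

/-- For every `λ < 0`,
`∫_0^1 t · (|λ|/√(2π t (1−t)³)) · exp(−λ² t/(2(1−t))) dt
  = 1 − |λ| · exp(λ²/2) · ∫_{|λ|}^∞ exp(−s²/2) ds`. -/
theorem mean_of_Z (lam : ℝ) (hlam : lam < 0) :
    (∫ t in Set.Ioo (0:ℝ) 1,
        t * (|lam| / Real.sqrt (2 * Real.pi * t * (1 - t) ^ 3)
          * Real.exp (-lam ^ 2 * t / (2 * (1 - t)))))
      = 1 - |lam| * Real.exp (lam ^ 2 / 2) * ∫ s in Set.Ioi |lam|, Real.exp (-s ^ 2 / 2) := by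
  rw [← sq_abs lam]
  exact integral_Ioo_mul_zDensity (abs_pos.mpr hlam.ne)
end

section
/- Let B be a standard Brownian motion on [0,1]. Then almost surely the events {V(B)_1 > 0} and {V(B)_t > 0 for all t ∈ (0,1]} coincide; consequently P( V(B)_t > 0 for all t ∈ (0,1] ) = P(B_1 > 0) = 1/2. -/
open MeasureTheory ProbabilityTheory Real Set Filter

/-- The first time at which a function `f` attains its minimum over `[0,1]`. -/
noncomputable def vervaatTau (f : ℝ → ℝ) : ℝ :=
  sInf {t | t ∈ Set.Icc (0:ℝ) 1 ∧ ∀ s ∈ Set.Icc (0:ℝ) 1, f t ≤ f s}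

/-- The Vervaat transform of a function `f : [0,1] → ℝ`:
`V(f)(t) = f(τ(f)+t mod 1) + f(1)·1_{t+τ(f) ≥ 1} − f(τ(f))`, where `τ(f)` is the first
time at which `f` attains its minimum over `[0,1]`. -/
noncomputable def vervaat (f : ℝ → ℝ) (t : ℝ) : ℝ :=
  if 1 ≤ t + vervaatTau f then f (t + vervaatTau f - 1) + f 1 - f (vervaatTau f)
  else f (t + vervaatTau f) - f (vervaatTau f)

/-- `B` is a standard Brownian motion on `[0,1]` under the probability measure `P`:
it starts at `0`, has continuous paths, and has independent Gaussian increments with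
`B_t − B_s ∼ N(0, t−s)` for `0 ≤ s ≤ t ≤ 1`. -/
structure IsBrownianMotion {Ω : Type*} [MeasurableSpace Ω] (P : Measure Ω)
    (B : ℝ → Ω → ℝ) : Prop where
  meas : ∀ t, Measurable (B t)
  cont : ∀ ω, ContinuousOn (fun t => B t ω) (Set.Icc 0 1)
  init : ∀ ω, B 0 ω = 0
  incr_law : ∀ s t : ℝ, 0 ≤ s → s ≤ t → t ≤ 1 →
    Measure.map (fun ω => B t ω - B s ω) P = gaussianReal 0 (t - s).toNNReal
  indep_incr : ∀ (n : ℕ) (τ : Fin (n + 1) → ℝ), Monotone τ →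
    (∀ i, τ i ∈ Set.Icc (0:ℝ) 1) →
    iIndepFun
      (fun (i : Fin n) => fun ω => B (τ i.succ) ω - B (τ i.castSucc) ω) P

/-- The Brownian bridge from `0` to `lam` built from `B`:
`B^{λ,br}_t = B_t − t·B_1 + λ·t`. -/
noncomputable def bridge {Ω : Type*} (B : ℝ → Ω → ℝ) (lam : ℝ) (t : ℝ) (ω : Ω) : ℝ :=
  B t ω - t * B 1 ω + lam * t

/-!
Since `V(f)(1) = f(1)`, only `V(B)_1 > 0 ⇒ V(B)_t > 0` needs proof. If `f` attains its minimum
over `[0,1]` at a single point `τ`, then for `t ∈ (0,1]` the value `V(f)(t)` is `f(τ+t) - f(τ) > 0`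
before the wrap-around and at least `f(1)` after it. So it suffices that a Brownian path a.s. has
a unique minimiser. Two minimisers `a < b` are separated by rationals `q < r`, and then
`min_{[0,q]} (B - B_q) - min_{[r,1]} (B - B_r) = B_r - B_q`. The left side is a limit of minima
over finite grids, which are functions of increments independent of the nondegenerate Gaussian
`B_r - B_q`; such a Gaussian falls within `ε` of an independent variable with probability `O(ε)`,
so the event is null. Finally `P(B_1 > 0) = 1/2` by symmetry of the Gaussian law.
-/

open scoped Topology NNReal ENNReal

section Minimizers

variable {f : ℝ → ℝ}

lemma IsCompact.isClosed_setOf_isMinOn {s : Set ℝ} (hs : IsCompact s) (hf : ContinuousOn f s) :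
    IsClosed {t ∈ s | IsMinOn f s t} := by
  rcases s.eq_empty_or_nonempty with rfl | hne
  · simp
  obtain ⟨x, hx, hmin⟩ := hs.exists_isMinOn hne hf
  have : {t ∈ s | IsMinOn f s t} = s ∩ f ⁻¹' Iic (f x) := Set.ext fun t =>
    and_congr_right fun _ => ⟨fun h => h hx, fun h => isMinOn_iff.2 fun y hy => h.trans (hmin hy)⟩
  rw [this]
  exact hf.preimage_isClosed_of_isClosed hs.isClosed isClosed_Iic

lemma vervaatTau_mem (hf : ContinuousOn f (Icc 0 1)) :
    vervaatTau f ∈ {t ∈ Icc (0:ℝ) 1 | IsMinOn f (Icc 0 1) t} := by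
  obtain ⟨x, hx, hmin⟩ := isCompact_Icc.exists_isMinOn (nonempty_Icc.2 zero_le_one) hf
  exact (isCompact_Icc.isClosed_setOf_isMinOn hf).csInf_mem ⟨x, hx, hmin⟩
    ⟨0, fun t ht => ht.1.1⟩

lemma vervaat_one (hf : ContinuousOn f (Icc 0 1)) : vervaat f 1 = f 1 := by
  have hτ := (vervaatTau_mem hf).1.1
  rw [vervaat, if_pos (by linarith), add_sub_cancel_left, add_sub_cancel_left]

lemma vervaat_pos_of_subsingleton_isMinOn (hf : ContinuousOn f (Icc 0 1))
    (huniq : {t ∈ Icc (0:ℝ) 1 | IsMinOn f (Icc 0 1) t}.Subsingleton) (h1 : 0 < f 1) {t : ℝ}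
    (ht : t ∈ Ioc 0 1) : 0 < vervaat f t := by
  obtain ⟨⟨hτ0, hτ1⟩, hmin⟩ := vervaatTau_mem hf
  obtain ⟨ht0, ht1⟩ := ht
  rw [vervaat]
  split_ifs with hwrap
  · have : f (vervaatTau f) ≤ f (t + vervaatTau f - 1) := hmin ⟨by linarith, by linarith⟩
    linarith
  · push Not at hwrap
    have hs : t + vervaatTau f ∈ Icc (0:ℝ) 1 := ⟨by linarith, hwrap.le⟩
    refine sub_pos.2 ((hmin hs).lt_of_ne fun heq => ?_)
    have := huniq ⟨hs, fun y hy => heq ▸ hmin hy⟩ ⟨⟨hτ0, hτ1⟩, hmin⟩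
    linarith

end Minimizers

section GridMinimum

variable {f : ℝ → ℝ} {a b : ℝ} {n : ℕ}

noncomputable def gridPt (a b : ℝ) (n i : ℕ) : ℝ := a + (b - a) * i / (n + 1)

noncomputable def gridMin (f : ℝ → ℝ) (a b : ℝ) (n : ℕ) : ℝ :=
  (Finset.range (n + 2)).inf' Finset.nonempty_range_add_one fun i => f (gridPt a b n i)

lemma gridPt_zero : gridPt a b n 0 = a := by simp [gridPt]

lemma gridPt_last : gridPt a b n (n + 1) = b := by
  rw [gridPt, Nat.cast_add_one, mul_div_cancel_right₀ _ (by positivity)]; ring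

lemma monotone_gridPt (hab : a ≤ b) : Monotone (gridPt a b n) := fun i j hij => by
  unfold gridPt; gcongr

lemma gridPt_mem_Icc (hab : a ≤ b) {i : ℕ} (hi : i ≤ n + 1) : gridPt a b n i ∈ Icc a b :=
  ⟨by simpa [gridPt_zero] using monotone_gridPt hab (Nat.zero_le i),
    by simpa [gridPt_last] using monotone_gridPt (n := n) hab hi⟩

lemma tendsto_gridMin {x : ℝ} (hf : ContinuousOn f (Icc a b)) (hx : x ∈ Icc a b)
    (hmin : IsMinOn f (Icc a b) x) : Tendsto (gridMin f a b) atTop (𝓝 (f x)) := by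
  have hab : a ≤ b := hx.1.trans hx.2
  set θ := (x - a) / (b - a)
  have hθ0 : 0 ≤ θ := div_nonneg (sub_nonneg.2 hx.1) (sub_nonneg.2 hab)
  have hθ1 : θ ≤ 1 := div_le_one_of_le₀ (by linarith [hx.2]) (sub_nonneg.2 hab)
  have hθx : a + (b - a) * θ = x := by
    rcases eq_or_ne (b - a) 0 with h | h
    · rw [h]; linarith [hx.1, hx.2]
    · rw [mul_div_cancel₀ _ h]; ring
  -- `gridPt a b n (k n)` is the grid point just left of `x`; it bounds `gridMin` from above
  set k : ℕ → ℕ := fun n => ⌊θ * (n + 1)⌋₊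
  have hk : ∀ n, k n ≤ n + 1 := fun n => Nat.floor_le_of_le (by
    push_cast; exact mul_le_of_le_one_left (by positivity) hθ1)
  have hgrid : Tendsto (fun n => gridPt a b n (k n)) atTop (𝓝 x) := by
    have h := (tendsto_nat_floor_mul_div_atTop hθ0).comp
      (tendsto_natCast_atTop_atTop.comp (tendsto_add_atTop_nat 1))
    rw [← hθx]
    refine (tendsto_const_nhds.add (h.const_mul (b - a))).congr fun n => ?_
    simp [gridPt, k, mul_div_assoc]
  have hupper : Tendsto (fun n => f (gridPt a b n (k n))) atTop (𝓝 (f x)) :=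
    (hf x hx).tendsto.comp (tendsto_nhdsWithin_iff.2
      ⟨hgrid, Eventually.of_forall fun n => gridPt_mem_Icc hab (hk n)⟩)
  refine tendsto_of_tendsto_of_tendsto_of_le_of_le tendsto_const_nhds hupper (fun n => ?_)
    fun n => Finset.inf'_le _ (Finset.mem_range.2 (Nat.lt_succ_of_le (hk n)))
  exact Finset.le_inf' _ _ fun i hi =>
    hmin (gridPt_mem_Icc hab (Nat.le_of_lt_succ (Finset.mem_range.1 hi)))

lemma measurable_gridMin {Ω : Type*} {m : MeasurableSpace Ω} {X : ℝ → Ω → ℝ}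
    (hX : ∀ i ≤ n + 1, Measurable[m] (X (gridPt a b n i))) :
    Measurable[m] fun ω => gridMin (X · ω) a b n := by
  have : (fun ω => gridMin (X · ω) a b n)
      = (Finset.range (n + 2)).inf' Finset.nonempty_range_add_one fun i => X (gridPt a b n i) := by
    ext ω; simp [gridMin, Finset.inf'_apply]
  rw [this]
  exact Finset.inf'_induction _ _ (fun _ h₁ _ h₂ => h₁.inf h₂)
    fun i hi => hX i (Nat.le_of_lt_succ (Finset.mem_range.1 hi))

end GridMinimum

section Increments

variable {Ω : Type*} {B : ℝ → Ω → ℝ} {τ : ℕ → ℝ} {m a : ℕ}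

abbrev incrementsExcept (B : ℝ → Ω → ℝ) (τ : ℕ → ℝ) (m a : ℕ) : MeasurableSpace Ω :=
  ⨆ j ∈ {j : Fin m | (j : ℕ) ≠ a},
    MeasurableSpace.comap (fun ω => B (τ (j + 1)) ω - B (τ j) ω) inferInstance

lemma measurable_increment_incrementsExcept {j : ℕ} (hjm : j < m) (hja : j ≠ a) :
    Measurable[incrementsExcept B τ m a] fun ω => B (τ (j + 1)) ω - B (τ j) ω :=
  (comap_measurable _).mono
    (le_iSup₂ (f := fun (j : Fin m) (_ : j ∈ {j : Fin m | (j : ℕ) ≠ a}) =>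
      MeasurableSpace.comap (fun ω => B (τ (j + 1)) ω - B (τ j) ω) inferInstance)
      ⟨j, hjm⟩ hja) le_rfl

lemma measurable_sub_incrementsExcept {i k : ℕ} (hik : i ≤ k) (hkm : k ≤ m)
    (ha : a < i ∨ k ≤ a) :
    Measurable[incrementsExcept B τ m a] fun ω => B (τ k) ω - B (τ i) ω := by
  induction k, hik using Nat.le_induction with
  | base => simp
  | succ k hik ih =>
    convert (measurable_increment_incrementsExcept (j := k) (by omega) (by omega)).add
      (ih (by omega) (by omega)) using 1
    ext ω; simp

variable [MeasurableSpace Ω] {P : Measure Ω}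

lemma IsBrownianMotion.indepFun_increment (hB : IsBrownianMotion P B) (hτ : Monotone τ)
    (hτ1 : ∀ i ≤ m, τ i ∈ Icc 0 1) (ha : a < m) {Y : Ω → ℝ}
    (hY : Measurable[incrementsExcept B τ m a] Y) :
    IndepFun (fun ω => B (τ (a + 1)) ω - B (τ a) ω) Y P := by
  have hind := (hB.indep_incr m (fun i => τ i) (fun i j hij => hτ hij)
    fun i => hτ1 i (by omega)).iIndep
  have hsplit := indep_iSup_of_disjoint
    (fun j => ((hB.meas _).sub (hB.meas _)).comap_le) hind
    (disjoint_compl_right (a := {j : Fin m | (j : ℕ) = a}))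
  rw [IndepFun_iff_Indep]
  refine indep_of_indep_of_le hsplit ?_ hY.comap_le
  exact le_iSup₂ (f := fun (j : Fin m) (_ : j ∈ {j : Fin m | (j : ℕ) = a}) =>
    MeasurableSpace.comap (fun ω => B (τ (j + 1)) ω - B (τ j) ω) inferInstance) ⟨a, ha⟩ rfl

end Increments

section TwoBlockGrid

variable {q r : ℝ} {n : ℕ}

/-- Along this grid `B r - B q` is the increment of index `n + 1`, while the grid minima
of `B - B q` over `[0, q]` and of `B - B r` over `[r, 1]` only involve the other increments. -/
noncomputable def twoBlockGrid (q r : ℝ) (n i : ℕ) : ℝ :=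
  if i ≤ n + 1 then gridPt 0 q n i else gridPt r 1 n (i - (n + 2))

lemma twoBlockGrid_of_le {i : ℕ} (hi : i ≤ n + 1) : twoBlockGrid q r n i = gridPt 0 q n i :=
  if_pos hi

lemma twoBlockGrid_add (i : ℕ) : twoBlockGrid q r n (n + 2 + i) = gridPt r 1 n i := by
  rw [twoBlockGrid, if_neg (by omega), Nat.add_sub_cancel_left]

lemma monotone_twoBlockGrid (hq : 0 ≤ q) (hqr : q ≤ r) (hr : r ≤ 1) :
    Monotone (twoBlockGrid q r n) := by
  refine monotone_nat_of_le_succ fun i => ?_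
  rcases lt_trichotomy i (n + 1) with hi | rfl | hi
  · rw [twoBlockGrid_of_le hi.le, twoBlockGrid_of_le hi]
    exact monotone_gridPt hq (Nat.le_succ i)
  · rw [twoBlockGrid_of_le le_rfl, gridPt_last, show n + 1 + 1 = n + 2 + 0 from rfl,
      twoBlockGrid_add, gridPt_zero]
    exact hqr
  · obtain ⟨j, rfl⟩ : ∃ j, i = n + 2 + j := ⟨i - (n + 2), by omega⟩
    rw [twoBlockGrid_add, show n + 2 + j + 1 = n + 2 + (j + 1) by ring, twoBlockGrid_add]
    exact monotone_gridPt hr (Nat.le_succ j)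

lemma twoBlockGrid_mem_Icc (hq : 0 ≤ q) (hqr : q ≤ r) (hr : r ≤ 1) {i : ℕ}
    (hi : i ≤ 2 * n + 3) : twoBlockGrid q r n i ∈ Icc 0 1 := by
  rcases le_or_gt i (n + 1) with hi' | hi'
  · rw [twoBlockGrid_of_le hi']
    exact Icc_subset_Icc le_rfl (hqr.trans hr) (gridPt_mem_Icc hq hi')
  · obtain ⟨j, rfl⟩ : ∃ j, i = n + 2 + j := ⟨i - (n + 2), by omega⟩
    rw [twoBlockGrid_add]
    exact Icc_subset_Icc (hq.trans hqr) le_rfl (gridPt_mem_Icc hr (by omega))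

lemma IsBrownianMotion.indepFun_sub_gridMin {Ω : Type*} [MeasurableSpace Ω] {P : Measure Ω}
    {B : ℝ → Ω → ℝ} (hB : IsBrownianMotion P B) (hq : 0 ≤ q) (hqr : q ≤ r) (hr : r ≤ 1)
    (n : ℕ) :
    IndepFun (fun ω => B r ω - B q ω)
      (fun ω => gridMin (fun u => B u ω - B q ω) 0 q n - gridMin (fun u => B u ω - B r ω) r 1 n)
      P := by
  have hτq : twoBlockGrid q r n (n + 1) = q := by rw [twoBlockGrid_of_le le_rfl, gridPt_last]
  have hτr : twoBlockGrid q r n (n + 1 + 1) = r := by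
    rw [show n + 1 + 1 = n + 2 + 0 from rfl, twoBlockGrid_add, gridPt_zero]
  have hY : Measurable[incrementsExcept B (twoBlockGrid q r n) (2 * n + 3) (n + 1)] fun ω =>
      gridMin (fun u => B u ω - B q ω) 0 q n - gridMin (fun u => B u ω - B r ω) r 1 n := by
    refine Measurable.sub (measurable_gridMin fun i hi => ?_) (measurable_gridMin fun i hi => ?_)
    · have h := measurable_sub_incrementsExcept (B := B) (τ := twoBlockGrid q r n)
        (m := 2 * n + 3) (a := n + 1) hi (by omega) (Or.inr le_rfl)
      rw [twoBlockGrid_of_le hi, hτq] at h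
      simpa using h.fun_neg
    · have h := measurable_sub_incrementsExcept (B := B) (τ := twoBlockGrid q r n)
        (m := 2 * n + 3) (a := n + 1) (i := n + 1 + 1) (k := n + 2 + i) (by omega) (by omega)
        (Or.inl (by omega))
      rwa [twoBlockGrid_add, hτr] at h
  have h := hB.indepFun_increment (monotone_twoBlockGrid hq hqr hr)
    (fun _ => twoBlockGrid_mem_Icc hq hqr hr) (by omega) hY
  rwa [hτq, hτr] at h

end TwoBlockGrid

section Anticoncentration

variable {Ω : Type*} [MeasurableSpace Ω] {P : Measure Ω} {μ : ℝ} {v : ℝ≥0}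

lemma gaussianReal_Icc_le (hv : v ≠ 0) (y ε : ℝ) :
    gaussianReal μ v (Icc (y - ε) (y + ε)) ≤ ENNReal.ofReal (2 * ε / √(2 * π * v)) := by
  have hpdf : ∀ x, gaussianPDF μ v x ≤ ENNReal.ofReal (√(2 * π * v))⁻¹ := fun x => by
    refine ENNReal.ofReal_le_ofReal ?_
    rw [gaussianPDFReal]
    refine mul_le_of_le_one_right (by positivity) (Real.exp_le_one_iff.2 ?_)
    exact div_nonpos_of_nonpos_of_nonneg (neg_nonpos.2 (sq_nonneg _)) (by positivity)
  calc gaussianReal μ v (Icc (y - ε) (y + ε))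
      ≤ ∫⁻ _ in Icc (y - ε) (y + ε), ENNReal.ofReal (√(2 * π * v))⁻¹ := by
        rw [gaussianReal_apply μ hv]; exact lintegral_mono hpdf
    _ = ENNReal.ofReal (2 * ε / √(2 * π * v)) := by
        rw [setLIntegral_const, Real.volume_Icc, ← ENNReal.ofReal_mul (by positivity)]
        congr 1; ring

variable [IsProbabilityMeasure P]

lemma measure_abs_sub_le_le_of_indepFun {Z Y : Ω → ℝ} (hZ : Measurable Z) (hY : Measurable Y)
    (hind : IndepFun Z Y P) (hv : v ≠ 0) (hlaw : P.map Z = gaussianReal μ v) (ε : ℝ) :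
    P {ω | |Z ω - Y ω| ≤ ε} ≤ ENNReal.ofReal (2 * ε / √(2 * π * v)) := by
  have hs : MeasurableSet {p : ℝ × ℝ | |p.2 - p.1| ≤ ε} :=
    measurableSet_le (continuous_snd.sub continuous_fst).abs.measurable measurable_const
  have hmap : P.map (fun ω => (Y ω, Z ω)) = (P.map Y).prod (P.map Z) :=
    (indepFun_iff_map_prod_eq_prod_map_map hY.aemeasurable hZ.aemeasurable).1 hind.symm
  have := Measure.isProbabilityMeasure_map (μ := P) hY.aemeasurable
  calc P {ω | |Z ω - Y ω| ≤ ε}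
      = ∫⁻ y, gaussianReal μ v (Icc (y - ε) (y + ε)) ∂P.map Y := by
        rw [show {ω | |Z ω - Y ω| ≤ ε} = (fun ω => (Y ω, Z ω)) ⁻¹' {p | |p.2 - p.1| ≤ ε} from rfl,
          ← Measure.map_apply (hY.prodMk hZ) hs, hmap, Measure.prod_apply hs, hlaw]
        congr 1; ext y; congr 1; ext z
        simp [abs_sub_le_iff, and_comm, add_comm]
    _ ≤ ∫⁻ _, ENNReal.ofReal (2 * ε / √(2 * π * v)) ∂P.map Y :=
        lintegral_mono fun y => gaussianReal_Icc_le hv y ε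
    _ = ENNReal.ofReal (2 * ε / √(2 * π * v)) := by simp

lemma measure_setOf_tendsto_eq_zero_of_indepFun {Z : Ω → ℝ} {Y : ℕ → Ω → ℝ}
    (hZ : Measurable Z) (hY : ∀ n, Measurable (Y n)) (hind : ∀ n, IndepFun Z (Y n) P)
    (hv : v ≠ 0) (hlaw : P.map Z = gaussianReal μ v) :
    P {ω | Tendsto (fun n => Y n ω) atTop (𝓝 (Z ω))} = 0 := by
  have hbound : ∀ ε > 0, P {ω | Tendsto (fun n => Y n ω) atTop (𝓝 (Z ω))}
      ≤ ENNReal.ofReal (2 * ε / √(2 * π * v)) := fun ε hε => by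
    set A : ℕ → Set Ω := fun m => ⋂ n ≥ m, {ω | |Z ω - Y n ω| ≤ ε}
    have hsub : {ω | Tendsto (fun n => Y n ω) atTop (𝓝 (Z ω))} ⊆ ⋃ m, A m := fun ω hω => by
      obtain ⟨m, hm⟩ := Metric.tendsto_atTop.1 hω ε hε
      exact mem_iUnion.2 ⟨m, mem_iInter₂.2 fun n hn => by
        simpa [Real.dist_eq, abs_sub_comm] using (hm n hn).le⟩
    have hA : Monotone A := fun m m' hmm' =>
      biInter_mono (fun n hn => hmm'.trans hn) fun _ _ => le_rfl
    calc _ ≤ P (⋃ m, A m) := measure_mono hsub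
      _ = ⨆ m, P (A m) := hA.measure_iUnion
      _ ≤ _ := iSup_le fun m => (measure_mono (biInter_subset_of_mem le_rfl)).trans
          (measure_abs_sub_le_le_of_indepFun hZ (hY m) (hind m) hv hlaw ε)
  have hlim : Tendsto (fun ε => ENNReal.ofReal (2 * ε / √(2 * π * v))) (𝓝[>] 0) (𝓝 0) := by
    rw [← ENNReal.ofReal_zero]
    refine ENNReal.tendsto_ofReal (tendsto_nhdsWithin_of_tendsto_nhds ?_)
    simpa using ((continuous_const.mul continuous_id).div_const (√(2 * π * v))).tendsto 0
  exact le_antisymm (ge_of_tendsto hlim (eventually_nhdsWithin_of_forall hbound)) zero_le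

end Anticoncentration

lemma gaussianReal_Ioi_zero {v : ℝ≥0} (hv : v ≠ 0) : gaussianReal 0 v (Ioi 0) = 2⁻¹ := by
  have := nullSingletonClass_gaussianReal (μ := 0) hv
  have hneg : (gaussianReal 0 v).map (fun x => -x) = gaussianReal 0 v := by
    rw [gaussianReal_map_neg, neg_zero]
  have hsymm : gaussianReal 0 v (Ioi 0) = gaussianReal 0 v (Iic 0) := calc
    gaussianReal 0 v (Ioi 0) = (gaussianReal 0 v).map (fun x => -x) (Ioi 0) := by rw [hneg]
    _ = gaussianReal 0 v (Iio 0) := by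
      rw [Measure.map_apply measurable_neg measurableSet_Ioi]; congr 1; ext; simp
    _ = gaussianReal 0 v (Iic 0) := measure_congr Iio_ae_eq_Iic
  have hsum := prob_add_prob_compl (μ := gaussianReal 0 v) (measurableSet_Iic (a := (0:ℝ)))
  rw [compl_Iic, ← hsymm, ← mul_two] at hsum
  exact ENNReal.eq_inv_of_mul_eq_one_left hsum

section BrownianMotion

variable {Ω : Type*} [MeasurableSpace Ω] {P : Measure Ω} {B : ℝ → Ω → ℝ}

lemma IsBrownianMotion.measure_pos (hB : IsBrownianMotion P B) {t : ℝ} (ht0 : 0 < t)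
    (ht1 : t ≤ 1) : P {ω | 0 < B t ω} = 2⁻¹ := by
  have hlaw : P.map (B t) = gaussianReal 0 t.toNNReal := by
    simpa [hB.init] using hB.incr_law 0 t le_rfl ht0.le ht1
  rw [← gaussianReal_Ioi_zero (Real.toNNReal_pos.2 ht0).ne', ← hlaw,
    Measure.map_apply (hB.meas t) measurableSet_Ioi]
  rfl

variable [IsProbabilityMeasure P]

lemma IsBrownianMotion.measure_isMinOn_le_and_ge_eq_zero (hB : IsBrownianMotion P B) {q r : ℝ}
    (hq : 0 ≤ q) (hqr : q < r) (hr : r ≤ 1) :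
    P {ω | ∃ a ∈ Icc 0 q, ∃ b ∈ Icc r 1,
      IsMinOn (B · ω) (Icc 0 1) a ∧ IsMinOn (B · ω) (Icc 0 1) b} = 0 := by
  have hv : (r - q).toNNReal ≠ 0 := by simpa using hqr
  refine measure_mono_null (fun ω hω => ?_) (measure_setOf_tendsto_eq_zero_of_indepFun
    (Z := fun ω => B r ω - B q ω) ((hB.meas r).sub (hB.meas q)) (fun n => ?_)
    (hB.indepFun_sub_gridMin hq hqr.le hr) hv (hB.incr_law q r hq hqr.le hr))
  · obtain ⟨a, ha, b, hb, hmina, hminb⟩ := hω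
    have hsub₁ : Icc 0 q ⊆ Icc (0:ℝ) 1 := Icc_subset_Icc le_rfl (hqr.le.trans hr)
    have hsub₂ : Icc r 1 ⊆ Icc (0:ℝ) 1 := Icc_subset_Icc (hq.trans hqr.le) le_rfl
    have hab : B a ω = B b ω := le_antisymm (hmina (hsub₂ hb)) (hminb (hsub₁ ha))
    have h₁ := tendsto_gridMin (f := fun u => B u ω - B q ω)
      (((hB.cont ω).mono hsub₁).sub continuousOn_const) ha
      (isMinOn_iff.2 fun x hx => sub_le_sub_right (hmina (hsub₁ hx)) (B q ω))
    have h₂ := tendsto_gridMin (f := fun u => B u ω - B r ω)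
      (((hB.cont ω).mono hsub₂).sub continuousOn_const) hb
      (isMinOn_iff.2 fun x hx => sub_le_sub_right (hminb (hsub₂ hx)) (B r ω))
    have h := h₁.sub h₂
    rwa [hab, sub_sub_sub_cancel_left] at h
  · exact (measurable_gridMin fun i _ => (hB.meas _).sub (hB.meas q)).sub
      (measurable_gridMin fun i _ => (hB.meas _).sub (hB.meas r))

lemma IsBrownianMotion.ae_subsingleton_isMinOn (hB : IsBrownianMotion P B) :
    ∀ᵐ ω ∂P, {t ∈ Icc (0:ℝ) 1 | IsMinOn (B · ω) (Icc 0 1) t}.Subsingleton := by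
  have hnull : ∀ q r : ℚ, ∀ᵐ ω ∂P, (0:ℝ) ≤ q → (q:ℝ) < r → (r:ℝ) ≤ 1 →
      ¬ ∃ a ∈ Icc 0 (q:ℝ), ∃ b ∈ Icc (r:ℝ) 1,
        IsMinOn (B · ω) (Icc 0 1) a ∧ IsMinOn (B · ω) (Icc 0 1) b := fun q r => by
    simp only [eventually_imp_distrib_left]
    exact fun hq hqr hr =>
      measure_eq_zero_iff_ae_notMem.1 (hB.measure_isMinOn_le_and_ge_eq_zero hq hqr hr)
  filter_upwards [ae_all_iff.2 fun q => ae_all_iff.2 (hnull q)] with ω hω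
  suffices ∀ a ∈ {t ∈ Icc (0:ℝ) 1 | IsMinOn (B · ω) (Icc 0 1) t},
      ∀ b ∈ {t ∈ Icc (0:ℝ) 1 | IsMinOn (B · ω) (Icc 0 1) t}, ¬ a < b from
    fun a ha b hb => le_antisymm (not_lt.1 (this b hb a ha)) (not_lt.1 (this a ha b hb))
  intro a ha b hb hab
  obtain ⟨q, haq, hqb⟩ := exists_rat_btwn hab
  obtain ⟨r, hqr, hrb⟩ := exists_rat_btwn hqb
  exact hω q r (ha.1.1.trans haq.le) hqr (hrb.le.trans hb.1.2)
    ⟨a, ⟨ha.1.1, haq.le⟩, b, ⟨hrb.le, hb.1.2⟩, ha.2, hb.2⟩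

end BrownianMotion

/-- For a standard Brownian motion `B` on `[0,1]`, almost surely the
events `{V(B)_1 > 0}` and `{V(B)_t > 0 for all t ∈ (0,1]}` coincide; consequently
`P(V(B)_t > 0 for all t ∈ (0,1]) = P(B_1 > 0) = 1/2`. -/
theorem vervaat_positive_iff {Ω : Type*} [MeasurableSpace Ω] (P : Measure Ω)
    [IsProbabilityMeasure P] (B : ℝ → Ω → ℝ) (hB : IsBrownianMotion P B) :
    (∀ᵐ ω ∂P, (0 < vervaat (fun u => B u ω) 1
        ↔ ∀ t ∈ Set.Ioc (0:ℝ) 1, 0 < vervaat (fun u => B u ω) t))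
    ∧ P {ω | ∀ t ∈ Set.Ioc (0:ℝ) 1, 0 < vervaat (fun u => B u ω) t}
        = P {ω | 0 < B 1 ω}
    ∧ (P {ω | ∀ t ∈ Set.Ioc (0:ℝ) 1, 0 < vervaat (fun u => B u ω) t}).toReal = 1 / 2 := by
  have hV1 : ∀ ω, vervaat (fun u => B u ω) 1 = B 1 ω := fun ω => vervaat_one (hB.cont ω)
  have hiff : ∀ᵐ ω ∂P, (0 < vervaat (fun u => B u ω) 1
      ↔ ∀ t ∈ Set.Ioc (0:ℝ) 1, 0 < vervaat (fun u => B u ω) t) := by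
    filter_upwards [hB.ae_subsingleton_isMinOn] with ω hω
    exact ⟨fun h _ ht => vervaat_pos_of_subsingleton_isMinOn (hB.cont ω) hω (hV1 ω ▸ h) ht,
      fun h => h 1 ⟨one_pos, le_rfl⟩⟩
  have heq : P {ω | ∀ t ∈ Set.Ioc (0:ℝ) 1, 0 < vervaat (fun u => B u ω) t}
      = P {ω | 0 < B 1 ω} := by
    refine measure_congr (eventuallyEq_set.2 (hiff.mono fun ω hω => ?_))
    rw [mem_ofPred_eq, mem_ofPred_eq, ← hω, hV1]
  refine ⟨hiff, heq, ?_⟩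
  rw [heq, hB.measure_pos one_pos le_rfl]
  norm_num
end
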